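/- arXiv:2502.12090 — 4 statements merged into one kernel-verified Lean document; each statement's English description precedes it below -/
import Mathlib

section
/- Let n ≡ 1 (mod 4) be a positive integer and let T be a regular tournament with n vertices. If for every pair of distinct vertices u and v the number of common out-neighbors of u and v equals (n-1)/4 or (n-5)/4, then T is nearly-doubly-regular. -/
open scoped Classical

/-- The set of out-neighbors of `v` in the digraph with adjacency relation `r`. -/
noncomputable def outNbrs {V : Type*} [Fintype V] (r : V → V → Prop) (v : V) : Finset V :=
  Finset.univ.filter (fun w => r v w)

/-- The set of in-neighbors of `v` in the digraph with adjacency relation `r`. -/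
noncomputable def inNbrs {V : Type*} [Fintype V] (r : V → V → Prop) (v : V) : Finset V :=
  Finset.univ.filter (fun w => r w v)

/-- A tournament: a loopless digraph where for every pair of distinct vertices
exactly one of the two arcs is present. -/
def IsTournament {V : Type*} [Fintype V] (r : V → V → Prop) : Prop :=
  (∀ v, ¬ r v v) ∧ ∀ u v : V, u ≠ v → (r u v ↔ ¬ r v u)

/-- A regular tournament: `n` is odd and every out-degree equals `(n-1)/2`. -/
def IsRegularTournament {V : Type*} [Fintype V] (r : V → V → Prop) : Prop :=
  IsTournament r ∧ Odd (Fintype.card V) ∧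
    ∀ v : V, (outNbrs r v).card = (Fintype.card V - 1) / 2

/-- The subtournament induced on the (even-sized) vertex set `s` is near-regular:
every vertex of `s` has out-degree `s.card / 2` or `s.card / 2 - 1` within `s`. -/
def NearRegularOn {V : Type*} [Fintype V] (r : V → V → Prop) (s : Finset V) : Prop :=
  Even s.card ∧ ∀ v ∈ s,
    (s.filter (fun w => r v w)).card = s.card / 2 ∨
    (s.filter (fun w => r v w)).card = s.card / 2 - 1

/-- A nearly-doubly-regular tournament (`NDR_n`). -/
def IsNDR {V : Type*} [Fintype V] (r : V → V → Prop) : Prop :=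
  Fintype.card V % 4 = 1 ∧ IsRegularTournament r ∧
    ∀ v : V, NearRegularOn r (outNbrs r v) ∧ NearRegularOn r (inNbrs r v)

theorem regular_tournament_isNDR_of_common_outNbrs
    {V : Type} [Fintype V] (n : ℕ) (hn0 : 0 < n) (hn4 : n % 4 = 1)
    (hn : Fintype.card V = n) (r : V → V → Prop)
    (hreg : IsRegularTournament r)
    (h : ∀ u v : V, u ≠ v →
      (outNbrs r u ∩ outNbrs r v).card = (n - 1) / 4 ∨
      (outNbrs r u ∩ outNbrs r v).card = (n - 5) / 4) :
    IsNDR r := by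
  obtain ⟨⟨hirr, hasym⟩, hodd, hdeg⟩ := hreg
  set m := (n - 1) / 4 with hm
  have hnm : n = 4 * m + 1 := by omega
  have hdeg' : ∀ v, (outNbrs r v).card = 2 * m := by
    intro v; have := hdeg v; rw [hn] at this; omega
  have hcompl : ∀ v, inNbrs r v = Finset.univ \ insert v (outNbrs r v) := by
    intro v; ext w
    simp only [inNbrs, outNbrs, Finset.mem_filter, Finset.mem_univ, true_and,
      Finset.mem_sdiff, Finset.mem_insert, not_or]
    constructor
    · intro hw
      have hwv : w ≠ v := fun e => hirr v (e ▸ hw)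
      exact ⟨hwv, fun hvw => ((hasym v w hwv.symm).mp hvw) hw⟩
    · rintro ⟨hwv, hvw⟩
      exact (hasym w v hwv).mpr hvw
  have hin : ∀ v, (inNbrs r v).card = 2 * m := by
    intro v
    rw [hcompl v, Finset.card_sdiff_of_subset (Finset.subset_univ _), Finset.card_univ, hn,
      Finset.card_insert_of_notMem (by simp [outNbrs, hirr v]), hdeg' v]
    omega
  have h' : ∀ u v : V, u ≠ v → (outNbrs r u ∩ outNbrs r v).card = m ∨
      (outNbrs r u ∩ outNbrs r v).card = m - 1 := by
    intro u v huv
    have := h u v huv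
    omega
  refine ⟨by rw [hn]; exact hn4, ⟨⟨hirr, hasym⟩, hodd, hdeg⟩, ?_⟩
  intro v
  constructor
  · refine ⟨by rw [hdeg' v]; exact even_two_mul m, ?_⟩
    intro u hu
    have hvu : r v u := by simpa [outNbrs] using hu
    have huv : u ≠ v := fun e => hirr v (e ▸ hvu)
    have hfe : ((outNbrs r v).filter (fun w => r u w)).card
        = (outNbrs r u ∩ outNbrs r v).card := by
      congr 1
      ext w
      simp only [outNbrs, Finset.mem_filter, Finset.mem_univ, true_and, Finset.mem_inter]
      tauto
    rcases h' u v huv with hc | hc <;> rw [hdeg' v] <;> omega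
  · refine ⟨by rw [hin v]; exact even_two_mul m, ?_⟩
    intro u hu
    have huvr : r u v := by simpa [inNbrs] using hu
    have huv : u ≠ v := fun e => hirr v (e ▸ huvr)
    have hm1 : 1 ≤ m := by
      have h2 : 2 ≤ Fintype.card V := Fintype.one_lt_card_iff_nontrivial.mpr ⟨⟨u, v, huv⟩⟩
      omega
    have hfe : (inNbrs r v).filter (fun w => r u w)
        = outNbrs r u \ insert v (outNbrs r v) := by
      ext w
      simp only [inNbrs, outNbrs, Finset.mem_filter, Finset.mem_univ, true_and,
        Finset.mem_sdiff, Finset.mem_insert, not_or]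
      constructor
      · rintro ⟨hwv, huw⟩
        have hne : w ≠ v := fun e => hirr v (e ▸ hwv)
        exact ⟨huw, hne, fun hvw => ((hasym v w hne.symm).mp hvw) hwv⟩
      · rintro ⟨huw, hne, hvw⟩
        exact ⟨(hasym w v hne).mpr hvw, huw⟩
    have hsub : outNbrs r u ∩ insert v (outNbrs r v)
        = insert v (outNbrs r u ∩ outNbrs r v) := by
      ext w
      simp only [Finset.mem_inter, Finset.mem_insert]
      constructor
      · rintro ⟨h1, h2 | h2⟩
        · exact Or.inl h2
        · exact Or.inr ⟨h1, h2⟩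
      · rintro (rfl | ⟨h1, h2⟩)
        · exact ⟨by simpa [outNbrs] using huvr, Or.inl rfl⟩
        · exact ⟨h1, Or.inr h2⟩
    have hvnot : v ∉ outNbrs r u ∩ outNbrs r v := by
      simp [outNbrs, hirr v]
    have hcard : ((inNbrs r v).filter (fun w => r u w)).card
        = 2 * m - (1 + (outNbrs r u ∩ outNbrs r v).card) := by
      have hrw : outNbrs r u \ insert v (outNbrs r v)
          = outNbrs r u \ (outNbrs r u ∩ insert v (outNbrs r v)) :=
        (Finset.sdiff_inter_self_left _ _).symm
      rw [hfe, hrw, Finset.card_sdiff_of_subset Finset.inter_subset_left, hsub,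
        Finset.card_insert_of_notMem hvnot, hdeg' u]
      omega
    rcases h' u v huv with hc | hc <;> rw [hin v] <;> omega
end

section
/- Let n ≡ 1 (mod 4) be a positive integer, let G be an abelian group of order n, and let D ⊆ G \ {0} be a subset with (n-1)/2 elements such that (D, -D) is a partition of G \ {0}. Then the Cayley digraph Cay(G, D) is nearly-doubly-regular if and only if D is an (n, (n-1)/2, (n-5)/4)-almost difference set of G. -/
open scoped Classical

/-- The number of solutions `(x, y) ∈ D × D` of the equation `x - y = a`. -/
noncomputable def diffCount {G : Type*} [AddCommGroup G] (D : Finset G) (a : G) : ℕ :=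
  ((D ×ˢ D).filter (fun p => p.1 - p.2 = a)).card

/-- An `(n, k, λ)`-almost difference set of an abelian group `G` of odd order `n`:
a `k`-element subset `D ⊆ G \ {0}` such that for exactly `(n-1)/2` nonzero `a ∈ G`
the equation `x - y = a` has exactly `λ` solutions in `D × D`, and for the other
nonzero elements it has exactly `λ + 1` solutions. -/
def IsAlmostDiffSet {G : Type*} [AddCommGroup G] [Fintype G]
    (n k lam : ℕ) (D : Finset G) : Prop :=
  Fintype.card G = n ∧ (0 : G) ∉ D ∧ D.card = k ∧
  (Finset.univ.filter (fun a : G => a ≠ 0 ∧ diffCount D a = lam)).card = (n - 1) / 2 ∧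
  ∀ a : G, a ≠ 0 → diffCount D a = lam ∨ diffCount D a = lam + 1


/-!
In `Cay(G, D)` the in-neighbourhood of `0` is `D`, and the in-degree of `a ∈ D` inside `D` is
`#{x ∈ D | x - a ∈ D} = diffCount D a`. Translations are automorphisms of the tournament and
`x ↦ g - x` reverses it, so every in- and out-neighbourhood induces a copy of `D` or of its
reversal, and in a tournament reversal preserves near-regularity. With `n = 4m + 1`, `Cay(G, D)`
is therefore an `NDR_n` iff `diffCount D a ∈ {m - 1, m}` for all `a ∈ D`, equivalently (as
`diffCount D (-a) = diffCount D a`) for all `a ≠ 0`. Since the `diffCount D a`, `a ≠ 0`, sum to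
`2m (2m - 1)`, exactly `2m` of them then equal `m - 1`.
-/

open Finset

section Tournament

variable {V : Type*} [Fintype V] {r : V → V → Prop}

theorem IsTournament.card_filter_add_card_filter (hr : IsTournament r) {s : Finset V} {v : V}
    (hv : v ∈ s) : #(s.filter (r v ·)) + #(s.filter (r · v)) + 1 = #s := by
  have hsplit : s.filter (¬ r v ·) = insert v (s.filter (r · v)) := by
    ext w
    simp only [mem_filter, mem_insert]
    by_cases hwv : w = v
    · subst hwv
      simp [hv, hr.1 w]
    · simp [hwv, hr.2 v w (Ne.symm hwv)]
  have hvnot : v ∉ s.filter (r · v) := by simp [hr.1 v]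
  have hcount := card_filter_add_card_filter_not (s := s) (p := (r v ·))
  rw [hsplit, card_insert_of_notMem hvnot] at hcount
  omega

theorem IsTournament.nearRegularOn_flip_iff (hr : IsTournament r) (s : Finset V) :
    NearRegularOn (flip r) s ↔ NearRegularOn r s := by
  refine and_congr_right fun ⟨k, hk⟩ => forall₂_congr fun v hv => ?_
  have h : #(s.filter (r v ·)) + #(s.filter (flip r v ·)) + 1 = #s :=
    hr.card_filter_add_card_filter hv
  omega

end Tournament

theorem nearRegularOn_map_iff {V W : Type*} [Fintype V] [Fintype W] {r : V → V → Prop}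
    {r' : W → W → Prop} (e : V ↪ W) (he : ∀ x y, r' (e x) (e y) ↔ r x y) (s : Finset V) :
    NearRegularOn r' (s.map e) ↔ NearRegularOn r s := by
  simp only [NearRegularOn, card_map, forall_mem_map, filter_map, Function.comp_def, he]

section DiffCount

variable {G : Type*} [AddCommGroup G]

theorem diffCount_eq_card_filter (D : Finset G) (a : G) :
    diffCount D a = #(D.filter (· - a ∈ D)) := by
  refine card_nbij' Prod.fst (fun x => (x, x - a)) ?_ ?_ ?_ (fun _ _ => rfl) <;>
    intro p <;> aesop

theorem diffCount_neg (D : Finset G) (a : G) : diffCount D (-a) = diffCount D a := by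
  refine card_nbij' Prod.swap Prod.swap ?_ ?_ (fun _ _ => rfl) (fun _ _ => rfl) <;>
  · rintro ⟨x, y⟩ hxy
    simp_all [← neg_sub x y]

theorem sum_diffCount [Fintype G] (D : Finset G) : ∑ a, diffCount D a = #D * #D := by
  rw [← card_product]
  exact (card_eq_sum_card_fiberwise fun p _ => mem_univ (p.1 - p.2)).symm

theorem diffCount_zero (D : Finset G) : diffCount D 0 = #D := by
  simp [diffCount_eq_card_filter]

theorem forall_mem_diffCount_iff {D : Finset G} (hD0 : (0 : G) ∉ D)
    (hpart : ∀ x : G, x ≠ 0 → (x ∈ D ↔ -x ∉ D)) (P : ℕ → Prop) :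
    (∀ a ∈ D, P (diffCount D a)) ↔ ∀ a : G, a ≠ 0 → P (diffCount D a) := by
  refine ⟨fun h a ha => ?_, fun h a ha => h a (ne_of_mem_of_not_mem ha hD0)⟩
  by_cases haD : a ∈ D
  · exact h a haD
  · rw [← diffCount_neg]
    exact h (-a) (by by_contra hna; exact haD ((hpart a ha).mpr hna))

theorem card_filter_diffCount_eq_add_mul [Fintype G] {D : Finset G} {lam : ℕ}
    (h : ∀ a : G, a ≠ 0 → diffCount D a = lam ∨ diffCount D a = lam + 1) :
    #(univ.filter fun a : G => a ≠ 0 ∧ diffCount D a = lam) + #D * #D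
      = (Fintype.card G - 1) * (lam + 1) + #D := by
  have hpoint : ∀ a ∈ univ.erase (0 : G),
      diffCount D a + (if diffCount D a = lam then 1 else 0) = lam + 1 := by
    intro a ha
    rcases h a (ne_of_mem_erase ha) with h' | h' <;> simp [h']
  have hsum := sum_congr rfl hpoint
  rw [sum_add_distrib, sum_boole, sum_const, card_erase_of_mem (mem_univ _), card_univ,
    smul_eq_mul, filter_erase, Nat.cast_id] at hsum
  have htotal := sum_erase_add univ (diffCount D) (mem_univ (0 : G))
  rw [sum_diffCount, diffCount_zero] at htotal
  have hfilter : univ.filter (fun a : G => a ≠ 0 ∧ diffCount D a = lam)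
      = (univ.filter fun a => diffCount D a = lam).erase 0 := by
    ext a
    simp [and_comm]
  rw [hfilter]
  omega

theorem isAlmostDiffSet_iff [Fintype G] {n k lam : ℕ} {D : Finset G} (hG : Fintype.card G = n)
    (hD0 : (0 : G) ∉ D) (hk : #D = k) (hcount : (n - 1) * (lam + 1) + k = (n - 1) / 2 + k * k) :
    IsAlmostDiffSet n k lam D ↔
      ∀ a : G, a ≠ 0 → diffCount D a = lam ∨ diffCount D a = lam + 1 := by
  refine ⟨fun h => h.2.2.2.2, fun h => ⟨hG, hD0, hk, ?_, h⟩⟩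
  have := card_filter_diffCount_eq_add_mul h
  rw [hG, hk] at this
  omega

end DiffCount

section Cayley

variable {G : Type*} [AddCommGroup G] [Fintype G] {D : Finset G}

theorem cayley_isTournament (hD0 : (0 : G) ∉ D) (hpart : ∀ x : G, x ≠ 0 → (x ∈ D ↔ -x ∉ D)) :
    IsTournament (fun x y : G => x - y ∈ D) :=
  ⟨fun v => by simpa using hD0,
    fun u v huv => by simpa using hpart (u - v) (sub_ne_zero.mpr huv)⟩

theorem cayley_inNbrs (D : Finset G) (g : G) :
    inNbrs (fun x y : G => x - y ∈ D) g = D.map (addRightEmbedding g) := by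
  ext w
  simp [inNbrs, ← eq_sub_iff_add_eq]

theorem cayley_outNbrs (D : Finset G) (g : G) :
    outNbrs (fun x y : G => x - y ∈ D) g = D.map (Equiv.subLeft g).toEmbedding := by
  ext w
  simp [outNbrs, neg_add_eq_sub]

theorem cayley_nearRegularOn_inNbrs_iff (g : G) :
    NearRegularOn (fun x y : G => x - y ∈ D) (inNbrs (fun x y : G => x - y ∈ D) g) ↔
      NearRegularOn (fun x y : G => x - y ∈ D) D := by
  rw [cayley_inNbrs]
  exact nearRegularOn_map_iff _ (fun x y => by simp) D

theorem cayley_nearRegularOn_outNbrs_iff (hT : IsTournament (fun x y : G => x - y ∈ D)) (g : G) :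
    NearRegularOn (fun x y : G => x - y ∈ D) (outNbrs (fun x y : G => x - y ∈ D) g) ↔
      NearRegularOn (fun x y : G => x - y ∈ D) D := by
  rw [cayley_outNbrs, ← hT.nearRegularOn_flip_iff]
  exact nearRegularOn_map_iff _ (fun x y => by simp [flip]) D

theorem cayley_isNDR_iff (hT : IsTournament (fun x y : G => x - y ∈ D))
    (hcard : Fintype.card G % 4 = 1) (hD : #D = (Fintype.card G - 1) / 2) :
    IsNDR (fun x y : G => x - y ∈ D) ↔ NearRegularOn (fun x y : G => x - y ∈ D) D := by
  have hregular : IsRegularTournament (fun x y : G => x - y ∈ D) :=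
    ⟨hT, Nat.odd_iff.mpr (by omega), fun g => by rw [cayley_outNbrs, card_map, hD]⟩
  simp only [IsNDR, cayley_nearRegularOn_outNbrs_iff hT, cayley_nearRegularOn_inNbrs_iff,
    and_self, forall_const, hcard, hregular, true_and]

theorem cayley_nearRegularOn_iff (hT : IsTournament (fun x y : G => x - y ∈ D)) :
    NearRegularOn (fun x y : G => x - y ∈ D) D ↔
      Even #D ∧ ∀ a ∈ D, diffCount D a = #D / 2 ∨ diffCount D a = #D / 2 - 1 := by
  rw [← hT.nearRegularOn_flip_iff]
  simp only [NearRegularOn, flip, diffCount_eq_card_filter]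
  -- the two sides differ only in their `Decidable` instances
  congr! <;> exact funext fun s => filter_congr_decidable ..

end Cayley

theorem cayley_isNDR_iff_almostDiffSet_general
    (n : ℕ) (hn4 : n % 4 = 1)
    (G : Type) [AddCommGroup G] [Fintype G] (hG : Fintype.card G = n)
    (D : Finset G) (hD0 : (0 : G) ∉ D) (hDcard : D.card = (n - 1) / 2)
    (hpart : ∀ x : G, x ≠ 0 → (x ∈ D ↔ -x ∉ D)) :
    IsNDR (fun x y : G => x - y ∈ D) ↔
      IsAlmostDiffSet n ((n - 1) / 2) ((n - 5) / 4) D := by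
  obtain ⟨m, rfl⟩ : ∃ m, n = 4 * m + 1 := ⟨n / 4, by omega⟩
  have hk : (4 * m + 1 - 1) / 2 = 2 * m := by omega
  rw [hk] at hDcard ⊢
  have hT := cayley_isTournament hD0 hpart
  have hcount : (4 * m + 1 - 1) * ((4 * m + 1 - 5) / 4 + 1) + 2 * m
      = (4 * m + 1 - 1) / 2 + 2 * m * (2 * m) := by
    rcases Nat.eq_zero_or_pos m with rfl | hm
    · rfl
    · rw [show (4 * m + 1 - 5) / 4 + 1 = m by omega, hk, Nat.add_sub_cancel]
      ring
  rw [cayley_isNDR_iff hT (by omega) (by omega), cayley_nearRegularOn_iff hT,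
    isAlmostDiffSet_iff hG hD0 hDcard hcount, hDcard, and_iff_right (even_two_mul m)]
  refine Iff.trans ?_ (forall_mem_diffCount_iff hD0 hpart fun d => d = _ ∨ d = _ + 1)
  refine forall₂_congr fun a ha => ?_
  have : 0 < #D := card_pos.mpr ⟨a, ha⟩
  omega

theorem cayley_isNDR_iff_almostDiffSet
    (n : ℕ) (hn0 : 0 < n) (hn4 : n % 4 = 1)
    (G : Type) [AddCommGroup G] [Fintype G] (hG : Fintype.card G = n)
    (D : Finset G) (hD0 : (0 : G) ∉ D) (hDcard : D.card = (n - 1) / 2)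
    (hpart : ∀ x : G, x ≠ 0 → (x ∈ D ↔ -x ∉ D)) :
    IsNDR (fun x y : G => x - y ∈ D) ↔
      IsAlmostDiffSet n ((n - 1) / 2) ((n - 5) / 4) D :=
  cayley_isNDR_iff_almostDiffSet_general n hn4 G hG D hD0 hDcard hpart
end

section
/- Let p ≡ 5 (mod 8) be a prime such that p = s² + 4 for some odd integer s, let g be a primitive element of F_p, let C_0^(4) be the subgroup of F_p^* of index 4, and let D = C_0^(4) ∪ gC_0^(4). Let S_D be the set of nonzero a ∈ F_p such that x - y = a has exactly (p-5)/4 solutions (x, y) ∈ D × D. Then S_D = C_0^(2) (the set of nonzero squares of F_p) if and only if 1 ∈ S_D. -/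
open scoped Classical

/-- `cycC4 g i` is the coset `g^i C_0^{(4)}` of the index-4 subgroup `C_0^{(4)}`
of the cyclic group generated by the primitive element `g`. -/
def cycC4 {F : Type*} [Monoid F] (g : F) (i : ℕ) : Set F :=
  {x | ∃ k : ℕ, x = g ^ (4 * k + i)}

/-- `cycC2 g i` is the coset `g^i C_0^{(2)}` of the index-2 subgroup `C_0^{(2)}`
of the cyclic group generated by the primitive element `g`, as a finset. -/
noncomputable def cycC2 {F : Type*} [Monoid F] [Fintype F] (g : F) (i : ℕ) : Finset F :=
  Finset.univ.filter (fun x => ∃ k : ℕ, x = g ^ (2 * k + i))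

/-- `D = C_0^{(4)} ∪ g C_0^{(4)}` as a finset. -/
noncomputable def cycD {F : Type*} [Monoid F] [Fintype F] (g : F) : Finset F :=
  Finset.univ.filter (fun x => x ∈ cycC4 g 0 ∪ cycC4 g 1)

/-- `S_D`: the set of nonzero `a` for which `x - y = a` has exactly `lam`
solutions `(x, y) ∈ D × D`. -/
noncomputable def SDset {F : Type*} [Field F] [Fintype F] (D : Finset F) (lam : ℕ) : Finset F :=
  Finset.univ.filter (fun a => a ≠ 0 ∧ diffCount D a = lam)

theorem SD_eq_squares_iff_one_mem
    (p : ℕ) (hp : p.Prime) (hp5 : p % 8 = 5)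
    (hs : ∃ s : ℤ, Odd s ∧ (p : ℤ) = s ^ 2 + 4)
    (F : Type) [Field F] [Fintype F] (hF : Fintype.card F = p)
    (g : F) (hg : orderOf g = p - 1) :
    SDset (cycD g) ((p - 5) / 4) = cycC2 g 0 ↔
      (1 : F) ∈ SDset (cycD g) ((p - 5) / 4) := by
  classical
  obtain ⟨u, rfl⟩ : ∃ u, p = 8 * u + 5 := ⟨p / 8, by omega⟩
  have hg' : orderOf g = 8 * u + 4 := by omega
  have h0 : g ≠ 0 := by
    intro h
    have h1 := pow_orderOf_eq_one g
    rw [hg', h, zero_pow (by omega : 8 * u + 4 ≠ 0)] at h1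
    exact zero_ne_one h1
  set gu : Fˣ := Units.mk0 g h0 with hgu_def
  have hgu : orderOf gu = 8 * u + 4 := by
    rw [← orderOf_units, hgu_def, Units.val_mk0]; exact hg'
  have hinj : ∀ a b : ℕ, g ^ a = g ^ b ↔ a % (8 * u + 4) = b % (8 * u + 4) := by
    intro a b
    have h1 : g ^ a = g ^ b ↔ gu ^ a = gu ^ b := by
      rw [Units.ext_iff, Units.val_pow_eq_pow_val, Units.val_pow_eq_pow_val,
        hgu_def, Units.val_mk0]
    rw [h1, pow_inj_mod, hgu]
  have hgen : ∀ x : F, x ≠ 0 → ∃ m, m < 8 * u + 4 ∧ g ^ m = x := by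
    intro x hx
    have htop : Subgroup.zpowers gu = ⊤ := by
      apply Subgroup.eq_top_of_card_eq
      rw [Nat.card_zpowers, hgu, Nat.card_units, Nat.card_eq_fintype_card, hF]
      omega
    have hx' : Units.mk0 x hx ∈ Subgroup.zpowers gu := htop ▸ Subgroup.mem_top _
    rw [← mem_powers_iff_mem_zpowers] at hx'
    obtain ⟨m, hm⟩ := hx'
    refine ⟨m % (8 * u + 4), Nat.mod_lt _ (by omega), ?_⟩
    have hmx : g ^ m = x := by
      have := congrArg Units.val hm
      rwa [Units.val_pow_eq_pow_val, hgu_def, Units.val_mk0] at this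
    rw [← hmx]
    exact (hinj _ _).mpr (Nat.mod_mod_of_dvd m dvd_rfl)
  have hmod4 : ∀ a b : ℕ, a % (8 * u + 4) = b % (8 * u + 4) → a % 4 = b % 4 := by
    intro a b h
    have h4 : (4 : ℕ) ∣ 8 * u + 4 := ⟨2 * u + 1, by ring⟩
    calc a % 4 = a % (8 * u + 4) % 4 := (Nat.mod_mod_of_dvd a h4).symm
      _ = b % (8 * u + 4) % 4 := by rw [h]
      _ = b % 4 := Nat.mod_mod_of_dvd b h4
  have hmemD : ∀ m : ℕ, g ^ m ∈ cycD g ↔ (m % 4 = 0 ∨ m % 4 = 1) := by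
    intro m
    simp only [cycD, Finset.mem_filter, Finset.mem_univ, true_and, Set.mem_union,
      cycC4, Set.mem_setOf_eq]
    constructor
    · rintro (⟨k, hk⟩ | ⟨k, hk⟩)
      · left
        have := hmod4 _ _ ((hinj m (4 * k + 0)).mp hk)
        omega
      · right
        have := hmod4 _ _ ((hinj m (4 * k + 1)).mp hk)
        omega
    · rintro (h | h)
      · exact Or.inl ⟨m / 4, by congr 1; omega⟩
      · exact Or.inr ⟨m / 4, by congr 1; omega⟩
  have h0D : (0 : F) ∉ cycD g := by
    simp only [cycD, Finset.mem_filter, Finset.mem_univ, true_and, Set.mem_union,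
      cycC4, Set.mem_setOf_eq]
    rintro (⟨k, hk⟩ | ⟨k, hk⟩) <;> exact pow_ne_zero _ h0 hk.symm
  have hmulD : ∀ e : ℕ, e % 4 = 0 → ∀ x : F, (x ∈ cycD g ↔ g ^ e * x ∈ cycD g) := by
    intro e he x
    by_cases hx : x = 0
    · rw [hx, mul_zero]
    · obtain ⟨m, hm, rfl⟩ := hgen x hx
      rw [← pow_add, hmemD, hmemD]
      omega
  have hscale : ∀ e : ℕ, e % 4 = 0 → ∀ a : F,
      diffCount (cycD g) (g ^ e * a) = diffCount (cycD g) a := by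
    intro e he a
    have hgK : (g : F) ^ e ≠ 0 := pow_ne_zero _ h0
    unfold diffCount
    refine (Finset.card_bij' (fun q _ => (g ^ e * q.1, g ^ e * q.2))
      (fun q _ => ((g ^ e)⁻¹ * q.1, (g ^ e)⁻¹ * q.2)) ?_ ?_ ?_ ?_).symm
    · intro q hq
      simp only [Finset.mem_filter, Finset.mem_product] at hq ⊢
      refine ⟨⟨(hmulD e he _).mp hq.1.1, (hmulD e he _).mp hq.1.2⟩, ?_⟩
      rw [← mul_sub, hq.2]
    · intro q hq
      simp only [Finset.mem_filter, Finset.mem_product] at hq ⊢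
      have hc1 : g ^ e * ((g ^ e)⁻¹ * q.1) = q.1 := by
        rw [← mul_assoc, mul_inv_cancel₀ hgK, one_mul]
      have hc2 : g ^ e * ((g ^ e)⁻¹ * q.2) = q.2 := by
        rw [← mul_assoc, mul_inv_cancel₀ hgK, one_mul]
      refine ⟨⟨(hmulD e he _).mpr (by rw [hc1]; exact hq.1.1),
        (hmulD e he _).mpr (by rw [hc2]; exact hq.1.2)⟩, ?_⟩
      rw [← mul_sub, hq.2, ← mul_assoc, inv_mul_cancel₀ hgK, one_mul]
    · intro q hq
      simp only [← mul_assoc, inv_mul_cancel₀ hgK, one_mul]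
    · intro q hq
      simp only [← mul_assoc, mul_inv_cancel₀ hgK, one_mul]
  have hnegd : ∀ a : F, diffCount (cycD g) (-a) = diffCount (cycD g) a := by
    intro a
    unfold diffCount
    refine (Finset.card_bij' (fun q _ => (q.2, q.1)) (fun q _ => (q.2, q.1)) ?_ ?_ ?_ ?_).symm
    · intro q hq
      simp only [Finset.mem_filter, Finset.mem_product] at hq ⊢
      exact ⟨⟨hq.1.2, hq.1.1⟩, by rw [← neg_sub, hq.2]⟩
    · intro q hq
      simp only [Finset.mem_filter, Finset.mem_product] at hq ⊢
      refine ⟨⟨hq.1.2, hq.1.1⟩, ?_⟩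
      rw [← neg_sub, hq.2, neg_neg]
    · intro q hq; rfl
    · intro q hq; rfl
  have hneg1 : g ^ (4 * u + 2) = -1 := by
    have hsq1 : g ^ (4 * u + 2) * g ^ (4 * u + 2) = 1 := by
      rw [← pow_add, (by ring : 4 * u + 2 + (4 * u + 2) = 8 * u + 4), ← hg',
        pow_orderOf_eq_one]
    rcases mul_self_eq_one_iff.mp hsq1 with h | h
    · exfalso
      have := Nat.le_of_dvd (by omega) (orderOf_dvd_of_pow_eq_one h)
      omega
    · exact h
  have hsq : ∀ (j : ℕ) (a : F),
      diffCount (cycD g) (g ^ (2 * j) * a) = diffCount (cycD g) a := by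
    intro j a
    rcases Nat.even_or_odd j with ⟨t, rfl⟩ | ⟨t, rfl⟩
    · rw [(by ring : 2 * (t + t) = 4 * t)]
      exact hscale (4 * t) (by omega) a
    · have h1 : g ^ (2 * (2 * t + 1)) * a = g ^ (4 * t) * (g ^ 2 * a) := by
        rw [← mul_assoc, ← pow_add]
        congr 2
        ring
      have h2 : (g : F) ^ 2 = -(g ^ (4 * u + 4)) := by
        have h3 : (g : F) ^ (4 * u + 4) = g ^ (4 * u + 2) * g ^ 2 := by
          rw [← pow_add]
        rw [h3, hneg1]
        ring
      rw [h1, hscale (4 * t) (by omega), h2, neg_mul, hnegd,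
        hscale (4 * u + 4) (by omega)]
  have hsqval : ∀ b : F, b ≠ 0 →
      diffCount (cycD g) b = diffCount (cycD g) 1 ∨
      diffCount (cycD g) b = diffCount (cycD g) g := by
    intro b hb
    obtain ⟨m, hm, rfl⟩ := hgen b hb
    rcases Nat.even_or_odd m with ⟨t, rfl⟩ | ⟨t, rfl⟩
    · left
      have h1 : g ^ (t + t) = g ^ (2 * t) * 1 := by rw [mul_one]; congr 1; ring
      rw [h1]
      exact hsq t 1
    · right
      have h1 : g ^ (2 * t + 1) = g ^ (2 * t) * g := pow_succ g (2 * t)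
      rw [h1]
      exact hsq t g
  have hmemC2 : ∀ m : ℕ, g ^ m ∈ cycC2 g 0 ↔ m % 2 = 0 := by
    intro m
    simp only [cycC2, Finset.mem_filter, Finset.mem_univ, true_and]
    constructor
    · rintro ⟨k, hk⟩
      have h2 : (2 : ℕ) ∣ 8 * u + 4 := ⟨4 * u + 2, by ring⟩
      have := (hinj m (2 * k + 0)).mp hk
      have : m % 2 = (2 * k + 0) % 2 := by
        calc m % 2 = m % (8 * u + 4) % 2 := (Nat.mod_mod_of_dvd m h2).symm
          _ = (2 * k + 0) % (8 * u + 4) % 2 := by rw [this]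
          _ = (2 * k + 0) % 2 := Nat.mod_mod_of_dvd _ h2
      omega
    · intro h
      exact ⟨m / 2, by congr 1; omega⟩
  have hsum : ∑ a : F, diffCount (cycD g) a = (cycD g).card * (cycD g).card := by
    rw [← Finset.card_product]
    exact (Finset.card_eq_sum_card_fiberwise
      (f := fun q : F × F => q.1 - q.2) (s := (cycD g) ×ˢ (cycD g)) (t := Finset.univ)
      (fun x _ => Finset.mem_univ _)).symm
  have hdc0 : diffCount (cycD g) 0 = (cycD g).card := by
    unfold diffCount
    refine Finset.card_bij' (fun q _ => q.1) (fun x _ => (x, x)) ?_ ?_ ?_ ?_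
    · intro q hq
      simp only [Finset.mem_filter, Finset.mem_product] at hq
      exact hq.1.1
    · intro x hx
      simp only [Finset.mem_filter, Finset.mem_product]
      exact ⟨⟨hx, hx⟩, sub_self x⟩
    · intro q hq
      simp only [Finset.mem_filter, Finset.mem_product] at hq
      exact Prod.ext rfl (sub_eq_zero.mp hq.2)
    · intro x hx; rfl
  have hcardD : (cycD g).card = 4 * u + 2 := by
    have himg : cycD g =
        Finset.image (fun j => g ^ (4 * (j / 2) + j % 2)) (Finset.range (4 * u + 2)) := by
      ext x
      simp only [Finset.mem_image, Finset.mem_range]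
      constructor
      · intro hx
        have hx0 : x ≠ 0 := fun h => h0D (h ▸ hx)
        obtain ⟨m, hm, rfl⟩ := hgen x hx0
        rcases (hmemD m).mp hx with h4 | h4
        · refine ⟨2 * (m / 4), by omega, ?_⟩
          congr 1
          omega
        · refine ⟨2 * (m / 4) + 1, by omega, ?_⟩
          congr 1
          omega
      · rintro ⟨j, hj, rfl⟩
        rw [hmemD]
        omega
    rw [himg, Finset.card_image_of_injOn, Finset.card_range]
    intro a ha b hb hab
    simp only [Finset.coe_range, Set.mem_Iio] at ha hb
    have h1 := (hinj _ _).mp hab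
    have hae : 4 * (a / 2) + a % 2 < 8 * u + 4 := by omega
    have hbe : 4 * (b / 2) + b % 2 < 8 * u + 4 := by omega
    rw [Nat.mod_eq_of_lt hae, Nat.mod_eq_of_lt hbe] at h1
    omega
  have hcontr : ¬ (diffCount (cycD g) 1 = 2 * u ∧ diffCount (cycD g) g = 2 * u) := by
    rintro ⟨hA, hB⟩
    have hall : ∀ b : F, b ≠ 0 → diffCount (cycD g) b = 2 * u := by
      intro b hb
      rcases hsqval b hb with h | h
      · rw [h, hA]
      · rw [h, hB]
    have hsplit := (Finset.add_sum_erase Finset.univ (diffCount (cycD g))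
      (Finset.mem_univ (0 : F))).symm
    have hconst : ∑ a ∈ Finset.univ.erase (0 : F), diffCount (cycD g) a =
        (Finset.univ.erase (0 : F)).card * (2 * u) :=
      Finset.sum_const_nat (fun x hx => hall x (Finset.ne_of_mem_erase hx))
    have hcarderase : (Finset.univ.erase (0 : F)).card = 8 * u + 4 := by
      rw [Finset.card_erase_of_mem (Finset.mem_univ _), Finset.card_univ, hF]
      omega
    rw [hsplit, hdc0, hconst, hcarderase, hcardD] at hsum
    have hx1 : (4 * u + 2) * (4 * u + 2) = (8 * u + 4) * (2 * u) + 8 * u + 4 := by ring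
    linarith
  have hlam : (8 * u + 5 - 5) / 4 = 2 * u := by omega
  constructor
  · intro h
    rw [h]
    simp only [cycC2, Finset.mem_filter, Finset.mem_univ, true_and]
    exact ⟨0, by simp⟩
  · intro h1
    simp only [SDset, Finset.mem_filter, Finset.mem_univ, true_and, hlam] at h1
    obtain ⟨-, hA⟩ := h1
    ext a
    simp only [SDset, Finset.mem_filter, Finset.mem_univ, true_and, hlam]
    constructor
    · rintro ⟨ha0, hda⟩
      obtain ⟨m, hm, rfl⟩ := hgen a ha0
      rw [hmemC2 m]
      by_contra hodd
      have hm2 : m % 2 = 1 := by omega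
      obtain ⟨t, rfl⟩ : ∃ t, m = 2 * t + 1 := ⟨m / 2, by omega⟩
      rw [pow_succ] at hda
      rw [hsq t g] at hda
      exact hcontr ⟨hA, hda⟩
    · intro haC2
      simp only [cycC2, Finset.mem_filter, Finset.mem_univ, true_and] at haC2
      obtain ⟨k, rfl⟩ := haC2
      refine ⟨pow_ne_zero _ h0, ?_⟩
      have h1 : g ^ (2 * k + 0) = g ^ (2 * k) * 1 := by rw [mul_one, add_zero]
      rw [h1, hsq k 1, hA]
end

section
/- Let p ≡ 5 (mod 8) be a prime, let g be a primitive element of F_p, let C_0^(4) be the subgroup of F_p^* of index 4, and let CT_p be the cyclotomic tournament with vertex set F_p and an arc from x to y if and only if x - y ∈ C_0^(4) ∪ gC_0^(4). Then the automorphism group of CT_p is exactly {σ_{a,b} : a ∈ C_0^(4), b ∈ F_p}, where σ_{a,b} is the permutation x ↦ ax + b of F_p. -/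
/-!
Let `S = C₀ ∪ gC₀` and `(L f)(x) = ∑_{δ ∈ S} f(x - δ) - |S| f(x)`. An automorphism `σ` of the
tournament satisfies `L (f ∘ σ) = (L f) ∘ σ`. Writing functions `F_p → F_p` as polynomials of
degree `< p`, `L` lowers the degree by exactly `n = (p - 1) / 4`, because the power sums
`∑_{δ ∈ S} δ^t` vanish for `0 < t < n` but not for `t = n`. So `L²` annihilates exactly the
polynomials of degree `< 2n`. Since `L² (x^j ∘ σ) = (L² x^j) ∘ σ = 0`, every power `σ^j` with
`j < 2n` has degree `< 2n`; if `σ` had degree `d ≥ 2`, a suitable power would have degree in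
`[2n, p)`. Hence `σ` is affine, `x ↦ a x + b`, and the multipliers `a` preserving `C₀ ∪ gC₀` are
exactly the elements of `C₀`.
-/

open Polynomial Finset

section DifferenceOperator

variable {F : Type*} [Field F]

def powerSum (S : Finset F) (t : ℕ) : F := ∑ δ ∈ S, δ ^ t

noncomputable def diffOp (S : Finset F) (P : F[X]) : F[X] :=
  ∑ δ ∈ S, taylor (-δ) P - C (#S : F) * P

theorem eval_diffOp (S : Finset F) (P : F[X]) (x : F) :
    (diffOp S P).eval x = ∑ δ ∈ S, P.eval (x - δ) - #S * P.eval x := by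
  simp [diffOp, eval_finsetSum, taylor_eval, sub_eq_add_neg]

theorem coeff_diffOp (S : Finset F) (P : F[X]) (i : ℕ) :
    (diffOp S P).coeff i = ∑ t ∈ range P.natDegree,
      ((t + 1 + i).choose i : F) * P.coeff (t + 1 + i) *
        ((-1) ^ (t + 1) * powerSum S (t + 1)) := by
  have hshift (δ : F) : (hasseDeriv i P).eval (-δ) = ∑ t ∈ range (P.natDegree + 1),
      ((t + i).choose i : F) * P.coeff (t + i) * ((-1) ^ t * δ ^ t) := by
    rw [eval_eq_sum_range' (n := P.natDegree + 1)
      ((natDegree_hasseDeriv_le P i).trans_lt (by omega))]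
    simp only [hasseDeriv_coeff, neg_pow δ]
  simp only [diffOp, coeff_sub, finsetSum_coeff, taylor_coeff, coeff_C_mul, hshift]
  rw [sum_comm, sum_range_succ']
  simp [powerSum, mul_sum, mul_comm]

variable {S : Finset F} {v : ℕ}

theorem coeff_diffOp_eq_zero (hm : ∀ t, 0 < t → t < v → powerSum S t = 0) (P : F[X]) {i : ℕ}
    (hi : P.natDegree < i + v) : (diffOp S P).coeff i = 0 := by
  rw [coeff_diffOp]
  refine sum_eq_zero fun t _ => ?_
  rcases lt_or_ge (t + 1) v with ht | ht
  · rw [hm (t + 1) t.succ_pos ht, mul_zero, mul_zero]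
  · rw [coeff_eq_zero_of_natDegree_lt (by omega), mul_zero, zero_mul]

theorem natDegree_diffOp_le (hm : ∀ t, 0 < t → t < v → powerSum S t = 0) (P : F[X]) :
    (diffOp S P).natDegree ≤ P.natDegree - v :=
  natDegree_le_iff_coeff_eq_zero.mpr fun _ hi => coeff_diffOp_eq_zero hm P (by omega)

theorem diffOp_eq_zero_of_natDegree_lt (hm : ∀ t, 0 < t → t < v → powerSum S t = 0) {P : F[X]}
    (hP : P.natDegree < v) : diffOp S P = 0 :=
  ext fun _ => coeff_diffOp_eq_zero hm P (by omega)

theorem diffOp_diffOp_eq_zero (hm : ∀ t, 0 < t → t < v → powerSum S t = 0) {P : F[X]}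
    (hP : P.natDegree < 2 * v) : diffOp S (diffOp S P) = 0 :=
  diffOp_eq_zero_of_natDegree_lt hm ((natDegree_diffOp_le hm P).trans_lt (by omega))

theorem coeff_diffOp_natDegree_sub (hm : ∀ t, 0 < t → t < v → powerSum S t = 0) (hv : 0 < v)
    {P : F[X]} (hvP : v ≤ P.natDegree) :
    (diffOp S P).coeff (P.natDegree - v) =
      (P.natDegree.choose v : F) * P.leadingCoeff * ((-1) ^ v * powerSum S v) := by
  rw [coeff_diffOp, sum_eq_single (v - 1)]
  · rw [Nat.sub_add_cancel hv, Nat.add_sub_cancel' hvP, Nat.choose_symm hvP, coeff_natDegree]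
  · intro t _ ht
    rcases lt_or_ge (t + 1) v with htv | htv
    · rw [hm (t + 1) t.succ_pos htv, mul_zero, mul_zero]
    · rw [coeff_eq_zero_of_natDegree_lt (by omega), mul_zero, zero_mul]
  · exact fun h => absurd (mem_range.mpr (by omega)) h

section CharP

variable {p : ℕ} [CharP F p]

theorem coeff_diffOp_natDegree_sub_ne_zero (hp : p.Prime)
    (hm : ∀ t, 0 < t → t < v → powerSum S t = 0) (hmv : powerSum S v ≠ 0) (hv : 0 < v)
    {P : F[X]} (hP : P ≠ 0) (hvP : v ≤ P.natDegree) (hPp : P.natDegree < p) :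
    (diffOp S P).coeff (P.natDegree - v) ≠ 0 := by
  have hchoose : (P.natDegree.choose v : F) ≠ 0 := (CharP.cast_eq_zero_iff F p _).not.mpr
    (hp.coprime_iff_not_dvd.mp (hp.coprime_choose_of_lt hPp hvP))
  rw [coeff_diffOp_natDegree_sub hm hv hvP]
  exact mul_ne_zero (mul_ne_zero hchoose (leadingCoeff_ne_zero.mpr hP))
    (mul_ne_zero (pow_ne_zero _ (neg_ne_zero.mpr one_ne_zero)) hmv)

theorem natDegree_diffOp (hp : p.Prime)
    (hm : ∀ t, 0 < t → t < v → powerSum S t = 0) (hmv : powerSum S v ≠ 0) (hv : 0 < v)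
    {P : F[X]} (hP : P ≠ 0) (hvP : v ≤ P.natDegree) (hPp : P.natDegree < p) :
    (diffOp S P).natDegree = P.natDegree - v :=
  (natDegree_diffOp_le hm P).antisymm
    (le_natDegree_of_ne_zero (coeff_diffOp_natDegree_sub_ne_zero hp hm hmv hv hP hvP hPp))

theorem diffOp_diffOp_ne_zero (hp : p.Prime)
    (hm : ∀ t, 0 < t → t < v → powerSum S t = 0) (hmv : powerSum S v ≠ 0) (hv : 0 < v)
    {P : F[X]} (hvP : 2 * v ≤ P.natDegree) (hPp : P.natDegree < p) :
    diffOp S (diffOp S P) ≠ 0 := by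
  have hP : P ≠ 0 := ne_zero_of_natDegree_gt (by omega : 0 < P.natDegree)
  have hdeg := natDegree_diffOp hp hm hmv hv hP (by omega) hPp
  have hcoeff := coeff_diffOp_natDegree_sub_ne_zero hp hm hmv hv hP (by omega) hPp
  have hQ : diffOp S P ≠ 0 := fun h => hcoeff (by rw [h, coeff_zero])
  have hcoeff' := coeff_diffOp_natDegree_sub_ne_zero hp hm hmv hv hQ (by omega) (by omega)
  exact fun h => hcoeff' (by rw [h, coeff_zero])

end CharP

theorem natDegree_lt_of_forall_eval_diffOp_diffOp_eq_zero [Fintype F] {p : ℕ} (hp : p.Prime)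
    (hF : Fintype.card F = p) (hm : ∀ t, 0 < t → t < v → powerSum S t = 0)
    (hmv : powerSum S v ≠ 0) (hv : 0 < v) {P : F[X]} (hPp : P.natDegree < p)
    (hP : ∀ x, (diffOp S (diffOp S P)).eval x = 0) : P.natDegree < 2 * v := by
  have := Fact.mk hp
  have := charP_of_card_eq_prime hF
  by_contra! hvP
  refine diffOp_diffOp_ne_zero hp hm hmv hv hvP hPp
    (eq_zero_of_natDegree_lt_card_of_eval_eq_zero _ Function.injective_id hP ?_)
  calc _ ≤ (diffOp S P).natDegree - v := natDegree_diffOp_le hm _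
    _ ≤ P.natDegree - v - v := Nat.sub_le_sub_right (natDegree_diffOp_le hm P) v
    _ < Fintype.card F := by omega

end DifferenceOperator

section PreservingPermutation

variable {F : Type*} [Field F] {S : Finset F} {σ : Equiv.Perm F}

theorem sum_apply_sub_eq_sum_sub {M : Type*} [AddCommMonoid M]
    (hσ : ∀ x y, x - y ∈ S ↔ σ x - σ y ∈ S) (f : F → M) (x : F) :
    ∑ δ ∈ S, f (σ (x - δ)) = ∑ δ ∈ S, f (σ x - δ) :=
  sum_nbij' (fun δ => σ x - σ (x - δ)) (fun δ => x - σ.symm (σ x - δ))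
    (fun δ hδ => (hσ x (x - δ)).mp (by simpa using hδ))
    (fun δ hδ => by simpa using (hσ x (σ.symm (σ x - δ))).mpr (by simpa using hδ))
    (fun δ _ => by simp) (fun δ _ => by simp) (fun δ _ => by simp)

theorem eval_diffOp_of_eval_eq_comp (hσ : ∀ x y, x - y ∈ S ↔ σ x - σ y ∈ S) {Q R : F[X]}
    (hQR : ∀ x, Q.eval x = R.eval (σ x)) (x : F) :
    (diffOp S Q).eval x = (diffOp S R).eval (σ x) := by
  simp only [eval_diffOp, hQR, sum_apply_sub_eq_sum_sub hσ (R.eval ·)]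

theorem natDegree_lt_of_eval_eq_comp [Fintype F] {p v : ℕ} (hp : p.Prime)
    (hF : Fintype.card F = p) (hm : ∀ t, 0 < t → t < v → powerSum S t = 0)
    (hmv : powerSum S v ≠ 0) (hv : 0 < v) (hσ : ∀ x y, x - y ∈ S ↔ σ x - σ y ∈ S)
    {Q R : F[X]} (hQ : Q.natDegree < p) (hR : R.natDegree < 2 * v)
    (hQR : ∀ x, Q.eval x = R.eval (σ x)) : Q.natDegree < 2 * v := by
  refine natDegree_lt_of_forall_eval_diffOp_diffOp_eq_zero hp hF hm hmv hv hQ fun x => ?_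
  rw [eval_diffOp_of_eval_eq_comp hσ (eval_diffOp_of_eval_eq_comp hσ hQR) x,
    diffOp_diffOp_eq_zero hm hR, eval_zero]

theorem exists_natDegree_lt_card_forall_eval_eq [Fintype F] (f : F → F) :
    ∃ P : F[X], P.natDegree < Fintype.card F ∧ ∀ x, P.eval x = f x := by
  classical
  have hinj : Set.InjOn id (↑(univ : Finset F) : Set F) := Function.injective_id.injOn
  refine ⟨Lagrange.interpolate univ id f, ?_,
    fun x => Lagrange.eval_interpolate_at_node f hinj (mem_univ x)⟩
  rcases eq_or_ne (Lagrange.interpolate univ id f) 0 with hP | hP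
  · simp [hP, Fintype.card_pos]
  · rw [natDegree_lt_iff_degree_lt hP, ← card_univ]
    exact Lagrange.degree_interpolate_lt f hinj

theorem exists_affine_of_forall_sub_mem_iff [Fintype F] {p v : ℕ} (hp : p.Prime)
    (hF : Fintype.card F = p) (hm : ∀ t, 0 < t → t < v → powerSum S t = 0)
    (hmv : powerSum S v ≠ 0) (hv : 0 < v) (hvp : 4 * v ≤ p + 1)
    (hσ : ∀ x y, x - y ∈ S ↔ σ x - σ y ∈ S) : ∃ a b : F, ∀ x, σ x = a * x + b := by
  obtain ⟨P, hPp, hPσ⟩ := exists_natDegree_lt_card_forall_eval_eq σ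
  rw [hF] at hPp
  set d := P.natDegree
  have hdeg_pow (j : ℕ) (hj : j < 2 * v) (hjp : j * d < p) : j * d < 2 * v := by
    simpa [natDegree_pow] using natDegree_lt_of_eval_eq_comp hp hF hm hmv hv hσ
      (Q := P ^ j) (R := X ^ j) (by simpa [natDegree_pow]) (by simpa) (by simp [hPσ])
  have hd : d < 2 * v := by simpa using hdeg_pow 1 (by omega) (by simpa)
  have hd1 : d ≤ 1 := by
    by_contra! hd2
    have hlt := Nat.lt_div_mul_add (a := 2 * v - 1) (b := d) (by omega)
    have hle := Nat.div_mul_le_self (2 * v - 1) d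
    -- `j * d` is the least multiple of `d` above `2 * v - 1`, so it lies in `[2v, 4v - 2]`
    set j := (2 * v - 1) / d + 1
    have hjd : j * d = (2 * v - 1) / d * d + d := by rw [add_mul, one_mul]
    have h2j : 2 * j ≤ j * d := by rw [mul_comm]; exact Nat.mul_le_mul_left j hd2
    have := hdeg_pow j (by omega) (by omega)
    omega
  refine ⟨P.coeff 1, P.coeff 0, fun x => ?_⟩
  rw [← hPσ, eq_X_add_C_of_natDegree_le_one hd1]
  simp [add_comm]

end PreservingPermutation

section Cyclotomic

section Monoid

variable {M : Type*} [Monoid M] {g : M}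

theorem pow_mem_cycC4_iff (hg : IsOfFinOrder g) (h4 : 4 ∣ orderOf g) {i m : ℕ} (hi : i < 4) :
    g ^ m ∈ cycC4 g i ↔ m % 4 = i := by
  refine ⟨fun ⟨k, hk⟩ => ?_, fun hm => ⟨m / 4, by rw [← hm, Nat.div_add_mod]⟩⟩
  have := (hg.pow_eq_pow_iff_modEq.mp hk).of_dvd h4
  unfold Nat.ModEq at this
  omega

theorem mul_mem_cycC4_iff (hg : IsOfFinOrder g) {a z : M} {i : ℕ} (ha : a ∈ cycC4 g 0) :
    a * z ∈ cycC4 g i ↔ z ∈ cycC4 g i := by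
  obtain ⟨k, rfl⟩ := ha
  refine ⟨fun ⟨l, hl⟩ => ?_, fun ⟨l, hl⟩ => ⟨k + l, by rw [hl, ← pow_add]; ring_nf⟩⟩
  obtain ⟨N, hN⟩ := Nat.exists_eq_add_one_of_ne_zero hg.orderOf_pos.ne'
  have hinv : g ^ (4 * (k * N)) * g ^ (4 * k + 0) = 1 := by
    rw [← pow_add, show 4 * (k * N) + (4 * k + 0) = (N + 1) * (4 * k) by ring, pow_mul, ← hN,
      pow_orderOf_eq_one, one_pow]
  exact ⟨k * N + l, by rw [← one_mul z, ← hinv, mul_assoc, hl, ← pow_add]; ring_nf⟩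

theorem forall_mul_mem_cycC4_union_iff (hg : IsOfFinOrder g) (h4 : 4 ∣ orderOf g) (a : M) :
    (∀ z, a * z ∈ cycC4 g 0 ∪ cycC4 g 1 ↔ z ∈ cycC4 g 0 ∪ cycC4 g 1) ↔ a ∈ cycC4 g 0 := by
  refine ⟨fun h => ?_, fun ha z => by simp only [Set.mem_union, mul_mem_cycC4_iff hg ha]⟩
  have h1 : a ∈ cycC4 g 0 ∪ cycC4 g 1 := by simpa using (h 1).mpr (Or.inl ⟨0, by simp⟩)
  obtain ha | ⟨k, rfl⟩ := h1
  · exact ha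
  · have hg2 := (h g).mpr (Or.inr ⟨0, by simp⟩)
    rw [← pow_succ, Set.mem_union, pow_mem_cycC4_iff hg h4 (by omega),
      pow_mem_cycC4_iff hg h4 (by omega)] at hg2
    omega

variable [DecidableEq M]

def connectionSet (g : M) (n : ℕ) : Finset M :=
  (range n ×ˢ range 2).image fun ki => g ^ (4 * ki.1 + ki.2)

theorem mem_connectionSet {n : ℕ} (hg : orderOf g = 4 * n) (hn : 0 < n) {x : M} :
    x ∈ connectionSet g n ↔ x ∈ cycC4 g 0 ∪ cycC4 g 1 := by
  simp only [connectionSet, mem_image, mem_product, mem_range, Prod.exists]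
  constructor
  · rintro ⟨k, i, ⟨-, hi⟩, rfl⟩
    interval_cases i
    exacts [Or.inl ⟨k, rfl⟩, Or.inr ⟨k, rfl⟩]
  · have hred (k i : ℕ) : g ^ (4 * (k % n) + i) = g ^ (4 * k + i) :=
      (orderOf_pos_iff.mp (by omega)).pow_eq_pow_iff_modEq.mpr
        (hg ▸ (Nat.ModEq.mul_left' 4 (Nat.mod_modEq k n)).add_right i)
    rintro (⟨k, rfl⟩ | ⟨k, rfl⟩)
    exacts [⟨k % n, 0, ⟨Nat.mod_lt k hn, by norm_num⟩, hred k 0⟩,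
      ⟨k % n, 1, ⟨Nat.mod_lt k hn, by norm_num⟩, hred k 1⟩]

end Monoid

variable {F : Type*} [Field F] [DecidableEq F] {g : F} {n : ℕ}

theorem powerSum_connectionSet (hg : orderOf g = 4 * n) (t : ℕ) :
    powerSum (connectionSet g n) t = (1 + g ^ t) * ∑ k ∈ range n, (g ^ (4 * t)) ^ k := by
  rw [powerSum, connectionSet, sum_image, sum_product, mul_sum]
  · refine sum_congr rfl fun k _ => ?_
    simp only [sum_range_succ, range_zero, sum_empty]
    ring
  · rintro ⟨k, i⟩ hki ⟨k', i'⟩ hki' h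
    simp only [coe_product, coe_range, Set.mem_prod, Set.mem_Iio] at hki hki'
    have := pow_injOn_Iio_orderOf (x := g) (by simp only [Set.mem_Iio, hg]; omega)
      (by simp only [Set.mem_Iio, hg]; omega) h
    simp only [Prod.mk.injEq]
    omega

theorem powerSum_connectionSet_eq_zero (hg : orderOf g = 4 * n) {t : ℕ} (ht : 0 < t)
    (htn : t < n) : powerSum (connectionSet g n) t = 0 := by
  have hne : g ^ (4 * t) ≠ 1 := pow_ne_one_of_lt_orderOf (by omega) (by omega)
  have hroot : (g ^ (4 * t)) ^ n = 1 := by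
    rw [← pow_mul, mul_right_comm, pow_mul, ← hg, pow_orderOf_eq_one, one_pow]
  rw [powerSum_connectionSet hg, geom_sum_eq hne, hroot, sub_self, zero_div, mul_zero]

theorem powerSum_connectionSet_self_ne_zero {p : ℕ} [CharP F p] (hg : orderOf g = 4 * n)
    (hn : 0 < n) (hnp : n < p) : powerSum (connectionSet g n) n ≠ 0 := by
  have hroot : g ^ (4 * n) = 1 := hg ▸ pow_orderOf_eq_one g
  rw [powerSum_connectionSet hg, hroot]
  simp only [one_pow, sum_const, card_range, nsmul_eq_mul, mul_one]
  refine mul_ne_zero (fun h => ?_) ((CharP.cast_eq_zero_iff F p n).not.mpr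
    fun hpn => (Nat.le_of_dvd hn hpn).not_gt hnp)
  have hsq : g ^ (2 * n) = 1 := by
    rw [pow_mul', show g ^ n = -1 by linear_combination h, neg_one_sq]
  exact pow_ne_one_of_lt_orderOf (by omega) (by omega) hsq

end Cyclotomic

theorem cyclotomic_tournament_automorphisms
    (p : ℕ) (hp : p.Prime) (hp5 : p % 8 = 5)
    (F : Type) [Field F] [Fintype F] (hF : Fintype.card F = p)
    (g : F) (hg : orderOf g = p - 1) (σ : Equiv.Perm F) :
    (∀ x y : F, (x - y ∈ cycC4 g 0 ∪ cycC4 g 1) ↔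
        (σ x - σ y ∈ cycC4 g 0 ∪ cycC4 g 1)) ↔
      ∃ a b : F, a ∈ cycC4 g 0 ∧ ∀ x : F, σ x = a * x + b := by
  classical
  obtain ⟨n, rfl⟩ : ∃ n, p = 4 * n + 1 := ⟨p / 4, by omega⟩
  have hgn : orderOf g = 4 * n := by omega
  have hn : 0 < n := by omega
  have hfin : IsOfFinOrder g := orderOf_pos_iff.mp (by omega)
  have := Fact.mk hp
  have := charP_of_card_eq_prime hF
  have hmul := forall_mul_mem_cycC4_union_iff hfin (by simp [hgn])
  simp only [← mem_connectionSet hgn hn] at hmul ⊢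
  constructor
  · intro hσ
    obtain ⟨a, b, hab⟩ := exists_affine_of_forall_sub_mem_iff hp hF
      (fun _ => powerSum_connectionSet_eq_zero hgn)
      (powerSum_connectionSet_self_ne_zero hgn hn (by omega)) hn (by omega) hσ
    exact ⟨a, b, (hmul a).mp fun z => by simpa [hab] using (hσ z 0).symm, hab⟩
  · rintro ⟨a, b, ha, hab⟩ x y
    simpa [hab, ← mul_sub] using ((hmul a).mpr ha (x - y)).symm
end
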